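/- There exists an absolute constant C > 0 such that for every α > 0, all integers 0 < m < N, every choice of multipliers q̂_0, …, q̂_N satisfying q̂_k = 0 for k ≤ m and 1 − m/k ≤ q̂_k < 1 for k > m, and every φ ∈ R_N, the remainder operator R_m = I − Q_m satisfies ‖D_x R_m φ‖² ≤ C α² m² ‖φ‖². -/

import Mathlib

open MeasureTheory Real

/-- Physicists' Hermite polynomial: `ℋ_n(x) = (−1)^n e^{x²} (dⁿ/dxⁿ) e^{−x²}`. -/
noncomputable def physHermite (n : ℕ) : ℝ → ℝ :=
  fun x => (-1 : ℝ) ^ n * Real.exp (x ^ 2) * iteratedDeriv n (fun y => Real.exp (-(y ^ 2))) x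

/-- Generalized Hermite function `H_n^α(x) = (α/(2^n n! √π))^{1/2} ℋ_n(αx) e^{−α²x²/2}`. -/
noncomputable def genHermite (α : ℝ) (n : ℕ) : ℝ → ℝ :=
  fun x => Real.sqrt (α / (2 ^ n * n.factorial * Real.sqrt Real.pi)) *
    physHermite n (α * x) * Real.exp (-(α ^ 2 * x ^ 2) / 2)

/-- Integer-indexed generalized Hermite function, with the convention `H_n^α ≡ 0` for `n < 0`. -/
noncomputable def genHermiteZ (α : ℝ) (n : ℤ) : ℝ → ℝ :=
  fun x => if 0 ≤ n then genHermite α n.toNat x else 0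

/-- The operator `D_x = ∂_x + α² x`. -/
noncomputable def Dx (α : ℝ) (u : ℝ → ℝ) : ℝ → ℝ :=
  fun x => deriv u x + α ^ 2 * x * u x

/-- The Sturm–Liouville operator
`L_α(u)(x) = −e^{α²x²/2} ∂_x(e^{−α²x²} ∂_x(e^{α²x²/2} u(x)))`. -/
noncomputable def SLop (α : ℝ) (u : ℝ → ℝ) : ℝ → ℝ :=
  fun x => -(Real.exp (α ^ 2 * x ^ 2 / 2) *
    deriv (fun y => Real.exp (-(α ^ 2 * y ^ 2)) *
      deriv (fun z => Real.exp (α ^ 2 * z ^ 2 / 2) * u z) y) x)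

/-! The functions `H_k^α` are orthonormal in `L²(ℝ)`: by Rodrigues' formula
`ℋ_k e^{-x²} = (-1)^k (e^{-x²})^{(k)}`, integrating by parts `k` times turns
`∫ ℋ_j ℋ_k e^{-x²}` into `∫ ℋ_j^{(k)} e^{-x²}`, and `ℋ_j^{(k)}` vanishes for `j < k` and is
the constant `2^k k!` for `j = k`. Since `ℋ_{k+1}' = 2(k+1) ℋ_k`, the operator `D_x` lowers
the index: `D_x H_{k+1}^α = α √(2(k+1)) H_k^α` and `D_x H_0^α = 0`. Hence
`‖D_x R_m φ‖² = 2α² Σ_k k (1 - q̂_k)² φ̂_k²`, and `k (1 - q̂_k)² ≤ m²` for every `k`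
(for `k > m` because `1 - q̂_k ≤ m / k`), so `C = 2` works. -/

open Polynomial

noncomputable def physHermitePoly : ℕ → ℝ[X]
  | 0 => 1
  | n + 1 => 2 * X * physHermitePoly n - derivative (physHermitePoly n)

theorem physHermitePoly_succ (n : ℕ) :
    physHermitePoly (n + 1) = 2 * X * physHermitePoly n - derivative (physHermitePoly n) := rfl

theorem derivative_physHermitePoly_succ (n : ℕ) :
    derivative (physHermitePoly (n + 1)) = ((2 * (n + 1) : ℕ) : ℝ[X]) * physHermitePoly n := by
  induction n with
  | zero => simp [physHermitePoly]
  | succ n ih =>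
    have h : derivative (physHermitePoly n) =
        2 * X * physHermitePoly n - physHermitePoly (n + 1) := by
      rw [physHermitePoly_succ]; ring
    rw [physHermitePoly_succ (n + 1), derivative_sub, ih, derivative_natCast_mul, h]
    simp only [derivative_mul, derivative_X, derivative_ofNat, ih]
    push_cast
    ring

theorem iterate_derivative_physHermitePoly_self (n : ℕ) :
    derivative^[n] (physHermitePoly n) = ((2 ^ n * n.factorial : ℕ) : ℝ[X]) := by
  induction n with
  | zero => simp [physHermitePoly]
  | succ n ih =>
    rw [Function.iterate_succ_apply, derivative_physHermitePoly_succ,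
      iterate_derivative_natCast_mul, ih, ← Nat.cast_mul, Nat.factorial_succ]
    congr 1
    ring

theorem iterate_derivative_physHermitePoly_of_lt {m n : ℕ} (h : m < n) :
    derivative^[n] (physHermitePoly m) = 0 := by
  obtain ⟨k, rfl⟩ := Nat.exists_eq_add_of_lt h
  rw [show m + k + 1 = k + 1 + m by ring, Function.iterate_add_apply,
    iterate_derivative_physHermitePoly_self, Function.iterate_succ_apply, derivative_natCast]
  exact Function.iterate_fixed derivative_zero k

theorem hasDerivAt_eval_mul_exp_neg_sq (p : ℝ[X]) (x : ℝ) :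
    HasDerivAt (fun y => p.eval y * Real.exp (-(y ^ 2)))
      ((derivative p - 2 * X * p).eval x * Real.exp (-(x ^ 2))) x := by
  have hexp : HasDerivAt (fun y : ℝ => Real.exp (-(y ^ 2))) (-(2 * x) * Real.exp (-(x ^ 2))) x :=
    (hasDerivAt_pow 2 x).fun_neg.exp.congr_deriv (by push_cast; ring)
  refine ((p.hasDerivAt x).mul hexp).congr_deriv ?_
  simp only [eval_sub, eval_mul, eval_ofNat, eval_X]
  ring

theorem iteratedDeriv_exp_neg_sq (n : ℕ) (x : ℝ) :
    iteratedDeriv n (fun y => Real.exp (-(y ^ 2))) x =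
      (-1) ^ n * (physHermitePoly n).eval x * Real.exp (-(x ^ 2)) := by
  induction n generalizing x with
  | zero => simp [physHermitePoly]
  | succ n ih =>
    rw [iteratedDeriv_succ, funext ih]
    convert ((hasDerivAt_eval_mul_exp_neg_sq (physHermitePoly n) x).const_mul ((-1) ^ n)).deriv
      using 1
    · simp only [mul_assoc]
    · rw [physHermitePoly_succ]
      simp only [eval_sub, eval_mul, eval_ofNat, eval_X]
      ring

theorem physHermite_eq_eval (n : ℕ) (x : ℝ) : physHermite n x = (physHermitePoly n).eval x := by
  rw [physHermite, iteratedDeriv_exp_neg_sq]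
  have hexp : Real.exp (x ^ 2) * Real.exp (-(x ^ 2)) = 1 := by rw [← Real.exp_add]; simp
  calc (-1) ^ n * Real.exp (x ^ 2) * ((-1) ^ n * (physHermitePoly n).eval x * Real.exp (-(x ^ 2)))
      = ((-1) ^ n * (-1) ^ n) * (Real.exp (x ^ 2) * Real.exp (-(x ^ 2))) *
          (physHermitePoly n).eval x := by ring
    _ = _ := by rw [← mul_pow, hexp]; norm_num

theorem integrable_eval_mul_exp_neg_sq (p : ℝ[X]) :
    Integrable fun x : ℝ => p.eval x * Real.exp (-(x ^ 2)) := by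
  have hmon (i : ℕ) : Integrable fun x : ℝ => x ^ i * Real.exp (-(x ^ 2)) := by
    simpa [Real.rpow_natCast] using
      integrable_rpow_mul_exp_neg_mul_sq one_pos (s := i) (by linarith [i.cast_nonneg (α := ℝ)])
  simp_rw [eval_eq_sum_range, Finset.sum_mul, mul_assoc]
  exact integrable_finsetSum _ fun i _ => (hmon i).const_mul _

theorem hasDerivAt_iteratedDeriv_exp_neg_sq (n : ℕ) (x : ℝ) :
    HasDerivAt (iteratedDeriv n fun y => Real.exp (-(y ^ 2)))
      (iteratedDeriv (n + 1) (fun y => Real.exp (-(y ^ 2))) x) x := by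
  rw [iteratedDeriv_succ]
  refine (ContDiff.differentiable_iteratedDeriv n ?_ (WithTop.coe_lt_top _) x).hasDerivAt
  fun_prop

theorem integrable_eval_mul_iteratedDeriv_exp_neg_sq (p : ℝ[X]) (n : ℕ) :
    Integrable fun x => p.eval x * iteratedDeriv n (fun y => Real.exp (-(y ^ 2))) x := by
  simp_rw [iteratedDeriv_exp_neg_sq]
  convert (integrable_eval_mul_exp_neg_sq (C ((-1) ^ n) * p * physHermitePoly n)) using 2
  simp only [eval_mul, eval_C]
  ring

theorem integral_eval_mul_iteratedDeriv_exp_neg_sq (p : ℝ[X]) (n : ℕ) :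
    ∫ x, p.eval x * iteratedDeriv n (fun y => Real.exp (-(y ^ 2))) x =
      (-1) ^ n * ∫ x, (derivative^[n] p).eval x * Real.exp (-(x ^ 2)) := by
  induction n generalizing p with
  | zero => simp
  | succ n ih =>
    have parts : ∫ x, p.eval x * iteratedDeriv (n + 1) (fun y => Real.exp (-(y ^ 2))) x =
        -∫ x, (derivative p).eval x * iteratedDeriv n (fun y => Real.exp (-(y ^ 2))) x :=
      integral_mul_deriv_eq_deriv_mul_of_integrable (fun x _ => p.hasDerivAt x)
        (fun x _ => hasDerivAt_iteratedDeriv_exp_neg_sq n x)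
        (integrable_eval_mul_iteratedDeriv_exp_neg_sq p (n + 1))
        (integrable_eval_mul_iteratedDeriv_exp_neg_sq _ n)
        (integrable_eval_mul_iteratedDeriv_exp_neg_sq p n)
    rw [parts, ih, ← Function.iterate_succ_apply, pow_succ]
    ring

theorem integral_eval_mul_physHermitePoly_mul_exp_neg_sq (p : ℝ[X]) (n : ℕ) :
    ∫ x, p.eval x * (physHermitePoly n).eval x * Real.exp (-(x ^ 2)) =
      ∫ x, (derivative^[n] p).eval x * Real.exp (-(x ^ 2)) := by
  have hsign : ((-1 : ℝ) ^ n) ^ 2 = 1 := by rw [← pow_mul]; exact Even.neg_one_pow ⟨n, by ring⟩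
  have hrodrigues (x : ℝ) : p.eval x * (physHermitePoly n).eval x * Real.exp (-(x ^ 2)) =
      (-1) ^ n * (p.eval x * iteratedDeriv n (fun y => Real.exp (-(y ^ 2))) x) := by
    rw [iteratedDeriv_exp_neg_sq]
    linear_combination -(p.eval x * (physHermitePoly n).eval x * Real.exp (-(x ^ 2))) * hsign
  simp_rw [hrodrigues]
  rw [integral_const_mul, integral_eval_mul_iteratedDeriv_exp_neg_sq, ← mul_assoc, ← sq, hsign,
    one_mul]

theorem integral_physHermitePoly_mul_physHermitePoly_mul_exp_neg_sq_of_lt {j k : ℕ}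
    (h : j < k) :
    ∫ x, (physHermitePoly j).eval x * (physHermitePoly k).eval x * Real.exp (-(x ^ 2)) = 0 := by
  simp [integral_eval_mul_physHermitePoly_mul_exp_neg_sq,
    iterate_derivative_physHermitePoly_of_lt h]

theorem integral_physHermitePoly_mul_self_mul_exp_neg_sq (n : ℕ) :
    ∫ x, (physHermitePoly n).eval x * (physHermitePoly n).eval x * Real.exp (-(x ^ 2)) =
      2 ^ n * n.factorial * √π := by
  have hgauss : ∫ x : ℝ, Real.exp (-(x ^ 2)) = √π := by simpa using integral_gaussian 1
  rw [integral_eval_mul_physHermitePoly_mul_exp_neg_sq, iterate_derivative_physHermitePoly_self]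
  simp [integral_const_mul, hgauss]

theorem integral_physHermitePoly_mul_physHermitePoly_mul_exp_neg_sq (j k : ℕ) :
    ∫ x, (physHermitePoly j).eval x * (physHermitePoly k).eval x * Real.exp (-(x ^ 2)) =
      if j = k then 2 ^ j * j.factorial * √π else 0 := by
  rcases lt_trichotomy j k with h | rfl | h
  · rw [integral_physHermitePoly_mul_physHermitePoly_mul_exp_neg_sq_of_lt h, if_neg h.ne]
  · rw [integral_physHermitePoly_mul_self_mul_exp_neg_sq, if_pos rfl]
  · simp_rw [mul_comm ((physHermitePoly j).eval _) ((physHermitePoly k).eval _)]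
    rw [integral_physHermitePoly_mul_physHermitePoly_mul_exp_neg_sq_of_lt h, if_neg h.ne']

noncomputable def genHermiteNormConst (α : ℝ) (n : ℕ) : ℝ :=
  √(α / (2 ^ n * n.factorial * √π))

theorem genHermite_eq (α : ℝ) (n : ℕ) (x : ℝ) :
    genHermite α n x = genHermiteNormConst α n * (physHermitePoly n).eval (α * x) *
      Real.exp (-(α ^ 2 * x ^ 2) / 2) := by
  rw [genHermite, physHermite_eq_eval, genHermiteNormConst]

theorem genHermite_mul_genHermite (α : ℝ) (j k : ℕ) (x : ℝ) :
    genHermite α j x * genHermite α k x =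
      genHermiteNormConst α j * genHermiteNormConst α k *
        ((physHermitePoly j).eval (α * x) * (physHermitePoly k).eval (α * x) *
          Real.exp (-((α * x) ^ 2))) := by
  have hexp : Real.exp (-((α * x) ^ 2)) =
      Real.exp (-(α ^ 2 * x ^ 2) / 2) * Real.exp (-(α ^ 2 * x ^ 2) / 2) := by
    rw [← Real.exp_add]; ring_nf
  rw [genHermite_eq, genHermite_eq, hexp]
  ring

theorem integrable_genHermite_mul_genHermite {α : ℝ} (hα : α ≠ 0) (j k : ℕ) :
    Integrable fun x => genHermite α j x * genHermite α k x := by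
  simp_rw [genHermite_mul_genHermite]
  refine Integrable.const_mul ?_ _
  simpa [eval_mul, mul_assoc] using
    (integrable_eval_mul_exp_neg_sq (physHermitePoly j * physHermitePoly k)).comp_mul_left' hα

theorem integral_genHermite_mul_genHermite {α : ℝ} (hα : 0 < α) (j k : ℕ) :
    ∫ x, genHermite α j x * genHermite α k x = if j = k then 1 else 0 := by
  simp_rw [genHermite_mul_genHermite]
  rw [integral_const_mul, Measure.integral_comp_mul_left
    (fun y => (physHermitePoly j).eval y * (physHermitePoly k).eval y * Real.exp (-(y ^ 2))),
    integral_physHermitePoly_mul_physHermitePoly_mul_exp_neg_sq]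
  split_ifs with h
  · subst h
    have hD : 0 < 2 ^ j * (j.factorial : ℝ) * √π := by positivity
    rw [genHermiteNormConst, Real.mul_self_sqrt (by positivity), abs_of_pos (inv_pos.2 hα),
      smul_eq_mul]
    field_simp
  · simp

theorem integral_sum_genHermite_sq {α : ℝ} (hα : 0 < α) (s : Finset ℕ) (a : ℕ → ℝ) :
    ∫ x, (∑ k ∈ s, a k * genHermite α k x) ^ 2 = ∑ k ∈ s, a k ^ 2 := by
  have hint (j k : ℕ) : Integrable fun x => a j * a k * (genHermite α j x * genHermite α k x) :=
    (integrable_genHermite_mul_genHermite hα.ne' j k).const_mul _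
  simp_rw [sq, Finset.sum_mul_sum, mul_mul_mul_comm]
  rw [integral_finsetSum _ fun j _ => integrable_finsetSum _ fun k _ => hint j k]
  refine Finset.sum_congr rfl fun j hj => ?_
  rw [integral_finsetSum _ fun k _ => hint j k]
  simp [integral_const_mul, integral_genHermite_mul_genHermite hα, hj]

theorem hasDerivAt_genHermite (α : ℝ) (n : ℕ) (x : ℝ) :
    HasDerivAt (genHermite α n)
      (genHermiteNormConst α n * α * (derivative (physHermitePoly n)).eval (α * x) *
          Real.exp (-(α ^ 2 * x ^ 2) / 2) - α ^ 2 * x * genHermite α n x) x := by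
  have hpoly : HasDerivAt (fun y => (physHermitePoly n).eval (α * y))
      ((derivative (physHermitePoly n)).eval (α * x) * α) x :=
    ((physHermitePoly n).hasDerivAt (α * x)).comp x ((hasDerivAt_id x).const_mul α)
      |>.congr_deriv (by rw [mul_one])
  have hexp : HasDerivAt (fun y => Real.exp (-(α ^ 2 * y ^ 2) / 2))
      (-(α ^ 2 * x) * Real.exp (-(α ^ 2 * x ^ 2) / 2)) x :=
    (((hasDerivAt_pow 2 x).const_mul (α ^ 2)).fun_neg.div_const 2).exp.congr_deriv
      (by push_cast; ring)
  rw [funext (genHermite_eq α n)]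
  beta_reduce
  exact ((hpoly.const_mul _).mul hexp).congr_deriv (by ring)

theorem Dx_genHermite (α : ℝ) (n : ℕ) (x : ℝ) :
    Dx α (genHermite α n) x = genHermiteNormConst α n * α *
      (derivative (physHermitePoly n)).eval (α * x) * Real.exp (-(α ^ 2 * x ^ 2) / 2) := by
  rw [Dx, (hasDerivAt_genHermite α n x).deriv]
  ring

theorem genHermiteNormConst_succ (α : ℝ) (n : ℕ) :
    genHermiteNormConst α (n + 1) * (2 * (n + 1)) =
      √(2 * (n + 1)) * genHermiteNormConst α n := by
  have hn : (0 : ℝ) ≤ 2 * (n + 1) := by positivity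
  rw [genHermiteNormConst, genHermiteNormConst, ← Real.sqrt_sq hn,
    ← Real.sqrt_mul' _ (by positivity), Real.sqrt_sq hn, ← Real.sqrt_mul hn, Nat.factorial_succ]
  congr 1
  push_cast
  field_simp
  ring

theorem Dx_genHermite_zero (α : ℝ) (x : ℝ) : Dx α (genHermite α 0) x = 0 := by
  simp [Dx_genHermite, physHermitePoly]

theorem Dx_genHermite_succ (α : ℝ) (n : ℕ) (x : ℝ) :
    Dx α (genHermite α (n + 1)) x = α * √(2 * (n + 1)) * genHermite α n x := by
  rw [Dx_genHermite, derivative_physHermitePoly_succ, genHermite_eq, eval_mul, eval_natCast]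
  push_cast
  linear_combination (α * (physHermitePoly n).eval (α * x) * Real.exp (-(α ^ 2 * x ^ 2) / 2)) *
    genHermiteNormConst_succ α n

theorem Dx_finsetSum {ι : Type*} (α : ℝ) (s : Finset ι) (a : ι → ℝ) {u : ι → ℝ → ℝ}
    (hu : ∀ i ∈ s, Differentiable ℝ (u i)) (x : ℝ) :
    Dx α (fun y => ∑ i ∈ s, a i * u i y) x = ∑ i ∈ s, a i * Dx α (u i) x := by
  have hderiv : HasDerivAt (fun y => ∑ i ∈ s, a i * u i y) (∑ i ∈ s, a i * deriv (u i) x) x :=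
    HasDerivAt.fun_sum fun i hi => ((hu i hi x).hasDerivAt).const_mul (a i)
  simp only [Dx, hderiv.deriv, Finset.mul_sum, ← Finset.sum_add_distrib]
  exact Finset.sum_congr rfl fun i _ => by ring

theorem Dx_sum_genHermite (α : ℝ) (N : ℕ) (a : ℕ → ℝ) (x : ℝ) :
    Dx α (fun y => ∑ k ∈ Finset.range (N + 1), a k * genHermite α k y) x =
      ∑ k ∈ Finset.range N, a (k + 1) * (α * √(2 * (k + 1))) * genHermite α k x := by
  rw [Dx_finsetSum α _ a (fun k _ y => (hasDerivAt_genHermite α k y).differentiableAt),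
    Finset.sum_range_succ', Dx_genHermite_zero, mul_zero, add_zero]
  simp_rw [Dx_genHermite_succ, mul_assoc]

theorem one_sub_sq_mul_le {m k : ℕ} {q : ℝ} (hsmall : k ≤ m → q = 0)
    (hlarge : m < k → 1 - (m : ℝ) / k ≤ q ∧ q < 1) : (1 - q) ^ 2 * k ≤ (m : ℝ) ^ 2 := by
  rcases le_or_gt k m with hkm | hmk
  · rw [hsmall hkm, sub_zero, one_pow, one_mul]
    exact_mod_cast hkm.trans (Nat.le_self_pow two_ne_zero m)
  · obtain ⟨hlow, hlt⟩ := hlarge hmk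
    have hk : (1 : ℝ) ≤ k := by exact_mod_cast hmk.trans_le' (Nat.zero_le m)
    calc (1 - q) ^ 2 * k ≤ ((m : ℝ) / k) ^ 2 * k := by gcongr; linarith
      _ = (m : ℝ) ^ 2 / k := by field_simp
      _ ≤ (m : ℝ) ^ 2 := div_le_self (by positivity) hk

/-- the remainder operator `R_m = I − Q_m`, acting on
`φ = Σ_{k=0}^N c_k H_k^α ∈ R_N` by `R_m φ = Σ_{k=0}^N (1 − q̂_k) c_k H_k^α`, satisfies
`‖D_x R_m φ‖² ≤ C α² m² ‖φ‖²` for an absolute constant `C > 0`. -/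
theorem DxR_le : ∃ C : ℝ, 0 < C ∧ ∀ (α : ℝ), 0 < α → ∀ (m N : ℕ), 0 < m → m < N →
    ∀ q : ℕ → ℝ, (∀ k ≤ N, k ≤ m → q k = 0) →
    (∀ k ≤ N, m < k → 1 - (m : ℝ) / (k : ℝ) ≤ q k ∧ q k < 1) →
    ∀ (c : ℕ → ℝ) (φ Rφ : ℝ → ℝ),
    (φ = fun x => ∑ k ∈ Finset.range (N + 1), c k * genHermite α k x) →
    (Rφ = fun x => ∑ k ∈ Finset.range (N + 1), (1 - q k) * c k * genHermite α k x) →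
    ∫ x : ℝ, (Dx α Rφ x) ^ 2 ≤ C * α ^ 2 * (m : ℝ) ^ 2 * ∫ x : ℝ, (φ x) ^ 2 := by
  refine ⟨2, two_pos, fun α hα m N _ _ q hsmall hlarge c φ Rφ hφ hRφ => ?_⟩
  have hweight (k : ℕ) (hk : k < N) : (1 - q (k + 1)) ^ 2 * (k + 1 : ℝ) ≤ (m : ℝ) ^ 2 := by
    exact_mod_cast one_sub_sq_mul_le (hsmall (k + 1) hk) (hlarge (k + 1) hk)
  simp_rw [hφ, hRφ, Dx_sum_genHermite, integral_sum_genHermite_sq hα]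
  calc ∑ k ∈ Finset.range N, ((1 - q (k + 1)) * c (k + 1) * (α * √(2 * (k + 1)))) ^ 2
      = ∑ k ∈ Finset.range N, 2 * α ^ 2 * ((1 - q (k + 1)) ^ 2 * (k + 1)) * c (k + 1) ^ 2 := by
        refine Finset.sum_congr rfl fun k _ => ?_
        rw [mul_pow, mul_pow, mul_pow, Real.sq_sqrt (by positivity)]
        ring
    _ ≤ ∑ k ∈ Finset.range N, 2 * α ^ 2 * (m : ℝ) ^ 2 * c (k + 1) ^ 2 := by
        gcongr with k hk
        exact hweight k (Finset.mem_range.1 hk)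
    _ ≤ 2 * α ^ 2 * (m : ℝ) ^ 2 * ∑ k ∈ Finset.range (N + 1), c k ^ 2 := by
        rw [← Finset.mul_sum, Finset.sum_range_succ' (fun k => c k ^ 2)]
        gcongr
        exact le_add_of_nonneg_right (sq_nonneg _)
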